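/- For nonnegative integer n and nonzero real λ, the degenerate multi-poly-Bernoulli polynomial with all r indices equal to 1 coincides with Carlitz's higher-order degenerate Bernoulli polynomial: β_{n,λ}^{(1,1,...,1)}(x) = β_{n,λ}^{(r)}(x). -/

import Mathlib

/-!
Substituting `y = 1 - e^{-t}` into `Li_{1,…,1}(y) = (-log(1-y))^r / r!` gives
`r! Li_{1,…,1}(1 - e^{-t}) = t^r`, so the two generating functions agree on a punctured
neighbourhood of `0`, and uniqueness of power series expansions identifies the coefficients.
The polylogarithm identity follows by induction on `r`: the coefficient recursion says that
`Li_{1^{r+1}}` vanishes at `0` and has derivative `Li_{1^r}(y)/(1-y)`, as does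
`(-log(1-y))^{r+1}/(r+1)!`.
-/

open scoped BigOperators

/-- Coefficient of `x^N` in the multiple polylogarithm, with the index list
given in *reverse* order (`k_r` first). -/
noncomputable def mpolylogCoeff : List ℤ → ℕ → ℝ
  | [], 0 => 1
  | [], _ + 1 => 0
  | _ :: _, 0 => 0
  | k :: ks, (n + 1) =>
      (∑ j ∈ Finset.range (n + 1), mpolylogCoeff ks j) / ((n + 1 : ℕ) : ℝ) ^ k

/-- Multiple polylogarithm `Li_{k_1,…,k_r}(x)`, where `ks = [k_1,…,k_r]`. -/
noncomputable def mpolylog (ks : List ℤ) (x : ℝ) : ℝ :=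
  ∑' n : ℕ, mpolylogCoeff ks.reverse n * x ^ n

/-- Degenerate falling factorial `(x)_{n,λ} = x(x-λ)⋯(x-(n-1)λ)`. -/
def degFallFac (x lam : ℝ) : ℕ → ℝ
  | 0 => 1
  | n + 1 => degFallFac x lam n * (x - n * lam)

open Filter Topology Finset FormalMultilinearSeries

section PowerSeriesUniqueness

variable {𝕜 : Type*} [NontriviallyNormedField 𝕜]

theorem FormalMultilinearSeries.ofScalars_radius_pos_of_summable {c : ℕ → 𝕜} {t : 𝕜}
    (ht : t ≠ 0) (hc : Summable fun n => c n * t ^ n) : 0 < (ofScalars 𝕜 c).radius := by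
  refine lt_of_lt_of_le (by simpa using ht) ((ofScalars 𝕜 c).le_radius_of_tendsto
    (r := ‖t‖₊) (l := 0) ?_)
  simpa [norm_mul, norm_pow] using hc.tendsto_atTop_zero.norm

theorem hasFPowerSeriesAt_tsum_mul_pow [CompleteSpace 𝕜] {c : ℕ → 𝕜}
    (hc : 0 < (ofScalars 𝕜 c).radius) :
    HasFPowerSeriesAt (fun t => ∑' n, c n * t ^ n) (ofScalars 𝕜 c) 0 := by
  have h := ((ofScalars 𝕜 c).hasFPowerSeriesOnBall hc).hasFPowerSeriesAt
  have hsum : (ofScalars 𝕜 c).sum = fun t => ∑' n, c n * t ^ n := by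
    simpa [ofScalarsSum] using ofScalarsSum_eq_tsum (E := 𝕜) c
  rwa [hsum] at h

theorem eq_of_tsum_mul_pow_eventuallyEq [CompleteSpace 𝕜] {a b : ℕ → 𝕜}
    (ha : ∀ᶠ t in 𝓝[≠] 0, Summable fun n => a n * t ^ n)
    (hb : ∀ᶠ t in 𝓝[≠] 0, Summable fun n => b n * t ^ n)
    (h : (fun t => ∑' n, a n * t ^ n) =ᶠ[𝓝[≠] 0] fun t => ∑' n, b n * t ^ n) :
    a = b := by
  obtain ⟨t, ⟨hat, hbt⟩, ht⟩ := ((ha.and hb).and self_mem_nhdsWithin).exists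
  have hpa := hasFPowerSeriesAt_tsum_mul_pow (ofScalars_radius_pos_of_summable ht hat)
  have hpb := hasFPowerSeriesAt_tsum_mul_pow (ofScalars_radius_pos_of_summable ht hbt)
  have heq := (hpa.continuousAt.eventuallyEq_nhds_iff_eventuallyEq_nhdsNE
    hpb.continuousAt).1 h
  exact ofScalars_series_injective 𝕜 𝕜 (hpa.eq_formalMultilinearSeries_of_eventually hpb heq)

end PowerSeriesUniqueness

theorem hasDerivAt_tsum_mul_pow_succ_div {c : ℕ → ℝ} {ρ y : ℝ}
    (hc : Summable fun n => ‖c n * ρ ^ n‖) (hy : |y| < ρ) :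
    HasDerivAt (fun w => ∑' n, c n * w ^ (n + 1) / (n + 1)) (∑' n, c n * y ^ n) y := by
  refine hasDerivAt_tsum_of_isPreconnected (g := fun n w => c n * w ^ (n + 1) / (n + 1))
    (g' := fun n w => c n * w ^ n) hc isOpen_Ioo isPreconnected_Ioo
    (fun n w _ => ?_) (fun n w hw => ?_) (y₀ := 0) ?_ ?_ (abs_lt.1 hy)
  · have h := ((hasDerivAt_pow (n + 1) w).const_mul (c n)).div_const ((n : ℝ) + 1)
    refine h.congr_deriv ?_
    rw [Nat.add_sub_cancel]
    push_cast
    field_simp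
  · have hρ : 0 ≤ ρ := (abs_nonneg y).trans hy.le
    simp only [norm_mul, norm_pow, Real.norm_eq_abs, abs_of_nonneg hρ]
    gcongr
    exact (abs_lt.2 hw).le
  · exact ⟨by linarith [abs_nonneg y], by linarith [abs_nonneg y]⟩
  · simp

section CauchyProductGeometric

variable {𝕜 : Type*} [NormedField 𝕜]

theorem sum_range_mul_pow (a : ℕ → 𝕜) (y : 𝕜) (n : ℕ) :
    (∑ k ∈ range (n + 1), a k) * y ^ n =
      ∑ k ∈ range (n + 1), a k * y ^ k * y ^ (n - k) := by
  rw [sum_mul]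
  refine sum_congr rfl fun k hk => ?_
  rw [mul_assoc, ← pow_add, Nat.add_sub_cancel' (mem_range_succ_iff.1 hk)]

theorem summable_norm_sum_range_mul_pow {a : ℕ → 𝕜} {y : 𝕜}
    (ha : Summable fun n => ‖a n * y ^ n‖) (hy : ‖y‖ < 1) :
    Summable fun n => ‖(∑ k ∈ range (n + 1), a k) * y ^ n‖ := by
  simpa only [sum_range_mul_pow] using
    summable_norm_sum_mul_range_of_summable_norm ha (summable_norm_geometric_of_norm_lt_one hy)

theorem tsum_sum_range_mul_pow [CompleteSpace 𝕜] {a : ℕ → 𝕜} {y : 𝕜}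
    (ha : Summable fun n => ‖a n * y ^ n‖) (hy : ‖y‖ < 1) :
    ∑' n, (∑ k ∈ range (n + 1), a k) * y ^ n = (∑' n, a n * y ^ n) * (1 - y)⁻¹ := by
  rw [← tsum_geometric_of_norm_lt_one hy, tsum_mul_tsum_eq_tsum_sum_range_of_summable_norm ha
    (summable_norm_geometric_of_norm_lt_one hy)]
  simp only [sum_range_mul_pow]

end CauchyProductGeometric

theorem mpolylogCoeff_replicate_one_succ_zero (r : ℕ) :
    mpolylogCoeff (List.replicate (r + 1) 1) 0 = 0 := rfl

theorem mpolylogCoeff_replicate_one_succ_succ (r n : ℕ) :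
    mpolylogCoeff (List.replicate (r + 1) 1) (n + 1) =
      (∑ j ∈ range (n + 1), mpolylogCoeff (List.replicate r 1) j) / (n + 1) := by
  simp [List.replicate_succ, mpolylogCoeff]

theorem abs_mpolylogCoeff_replicate_one_le_one (r n : ℕ) :
    |mpolylogCoeff (List.replicate r 1) n| ≤ 1 := by
  induction r generalizing n with
  | zero => cases n <;> simp [mpolylogCoeff]
  | succ r ih =>
    cases n with
    | zero => simp [mpolylogCoeff_replicate_one_succ_zero]
    | succ n =>
      rw [mpolylogCoeff_replicate_one_succ_succ, abs_div, div_le_one (by positivity)]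
      calc |∑ j ∈ range (n + 1), mpolylogCoeff (List.replicate r 1) j|
          ≤ ∑ j ∈ range (n + 1), |mpolylogCoeff (List.replicate r 1) j| :=
            abs_sum_le_sum_abs _ _
        _ ≤ ∑ _j ∈ range (n + 1), (1 : ℝ) := sum_le_sum fun j _ => ih j
        _ = |(n : ℝ) + 1| := by simp [abs_of_nonneg (by positivity : (0 : ℝ) ≤ n + 1)]

theorem summable_norm_mpolylogCoeff_replicate_one_mul_pow (r : ℕ) {y : ℝ} (hy : |y| < 1) :
    Summable fun n => ‖mpolylogCoeff (List.replicate r 1) n * y ^ n‖ := by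
  refine (summable_geometric_of_lt_one (abs_nonneg y) hy).of_nonneg_of_le
    (fun _ => by positivity) fun n => ?_
  rw [norm_mul, norm_pow, Real.norm_eq_abs, Real.norm_eq_abs]
  exact mul_le_of_le_one_left (by positivity) (abs_mpolylogCoeff_replicate_one_le_one r n)

theorem mpolylog_replicate_one_eq_tsum (r : ℕ) (y : ℝ) :
    mpolylog (List.replicate r 1) y = ∑' n, mpolylogCoeff (List.replicate r 1) n * y ^ n := by
  rw [mpolylog, List.reverse_replicate]

theorem mpolylog_replicate_one_succ_eq_tsum (r : ℕ) {y : ℝ} (hy : |y| < 1) :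
    mpolylog (List.replicate (r + 1) 1) y =
      ∑' n, (∑ j ∈ range (n + 1), mpolylogCoeff (List.replicate r 1) j) * y ^ (n + 1) /
        (n + 1) := by
  rw [mpolylog_replicate_one_eq_tsum,
    (summable_norm_mpolylogCoeff_replicate_one_mul_pow (r + 1) hy).of_norm.tsum_eq_zero_add]
  simp only [mpolylogCoeff_replicate_one_succ_zero, mpolylogCoeff_replicate_one_succ_succ, zero_mul,
    zero_add, div_mul_eq_mul_div]

theorem hasDerivAt_neg_log_one_sub_pow_div_factorial (r : ℕ) {z : ℝ} (hz : z ≠ 1) :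
    HasDerivAt (fun w => (-Real.log (1 - w)) ^ (r + 1) / (r + 1).factorial)
      ((-Real.log (1 - z)) ^ r / r.factorial * (1 - z)⁻¹) z := by
  have hlog : HasDerivAt (fun w => -Real.log (1 - w)) (1 - z)⁻¹ z := by
    have h := (((hasDerivAt_id z).const_sub 1).log (sub_ne_zero.2 hz.symm)).neg
    exact h.congr_deriv (by simp [div_eq_mul_inv])
  refine ((hlog.pow (r + 1)).div_const _).congr_deriv ?_
  rw [Nat.add_sub_cancel, Nat.factorial_succ]
  push_cast
  field_simp

theorem mpolylog_replicate_one (r : ℕ) {y : ℝ} (hy : |y| < 1) :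
    mpolylog (List.replicate r 1) y = (-Real.log (1 - y)) ^ r / r.factorial := by
  induction r generalizing y with
  | zero =>
    rw [mpolylog_replicate_one_eq_tsum, tsum_eq_single 0 fun n hn => ?_]
    · simp [mpolylogCoeff]
    · obtain ⟨m, rfl⟩ := Nat.exists_eq_succ_of_ne_zero hn
      simp [mpolylogCoeff]
  | succ r ih =>
    set S : ℕ → ℝ := fun n => ∑ j ∈ range (n + 1), mpolylogCoeff (List.replicate r 1) j
    set F : ℝ → ℝ := fun w => ∑' n, S n * w ^ (n + 1) / (n + 1)
    set G : ℝ → ℝ := fun w => (-Real.log (1 - w)) ^ (r + 1) / (r + 1).factorial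
    set F' : ℝ → ℝ := fun z => (-Real.log (1 - z)) ^ r / r.factorial * (1 - z)⁻¹
    have hF : ∀ z ∈ Set.Ioo (-1 : ℝ) 1, HasDerivAt F (F' z) z := by
      intro z hz
      have hz : |z| < 1 := abs_lt.2 hz
      obtain ⟨ρ, hzρ, hρ⟩ := exists_between hz
      have hρ' : |ρ| < 1 := by rwa [abs_of_nonneg ((abs_nonneg z).trans hzρ.le)]
      have hS := summable_norm_sum_range_mul_pow
        (summable_norm_mpolylogCoeff_replicate_one_mul_pow r hρ') hρ'
      refine (hasDerivAt_tsum_mul_pow_succ_div hS hzρ).congr_deriv ?_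
      rw [tsum_sum_range_mul_pow (summable_norm_mpolylogCoeff_replicate_one_mul_pow r hz) hz,
        ← mpolylog_replicate_one_eq_tsum, ih hz]
    have hG : ∀ z ∈ Set.Ioo (-1 : ℝ) 1, HasDerivAt G (F' z) z := fun z hz =>
      hasDerivAt_neg_log_one_sub_pow_div_factorial r hz.2.ne
    have hFG : Set.EqOn F G (Set.Ioo (-1) 1) :=
      isOpen_Ioo.eqOn_of_deriv_eq isPreconnected_Ioo
        (fun z hz => (hF z hz).differentiableAt.differentiableWithinAt)
        (fun z hz => (hG z hz).differentiableAt.differentiableWithinAt)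
        (fun z hz => (hF z hz).deriv.trans (hG z hz).deriv.symm)
        (show (0 : ℝ) ∈ Set.Ioo (-1) 1 by norm_num) (by simp [F, G])
    rw [mpolylog_replicate_one_succ_eq_tsum r hy]
    exact hFG (abs_lt.1 hy)

theorem factorial_mul_mpolylog_replicate_one_one_sub_exp (r : ℕ) {t : ℝ}
    (ht : -Real.log 2 < t) :
    r.factorial * mpolylog (List.replicate r 1) (1 - Real.exp (-t)) = t ^ r := by
  have hexp : Real.exp (-t) < 2 := by
    rw [← Real.exp_log (by norm_num : (0 : ℝ) < 2)]
    exact Real.exp_lt_exp.2 (by linarith)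
  have hy : |1 - Real.exp (-t)| < 1 := abs_lt.2 ⟨by linarith, by linarith [Real.exp_pos (-t)]⟩
  rw [mpolylog_replicate_one r hy, sub_sub_cancel, Real.log_exp, neg_neg]
  field_simp

theorem one_add_mul_rpow_one_div_ne_one {lam t : ℝ} (hlam : lam ≠ 0) (hpos : 0 < 1 + lam * t)
    (ht : t ≠ 0) : (1 + lam * t) ^ (1 / lam) ≠ 1 := by
  intro h
  have h1 : 1 + lam * t = 1 :=
    (Real.rpow_left_inj hpos.le zero_le_one (one_div_ne_zero hlam)).1 (by rwa [Real.one_rpow])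
  simp_all

theorem degMultiPolyBernoulli_ones_eq_carlitz_general (lam : ℝ) (hlam : lam ≠ 0)
    (r : ℕ)
    (β γ : ℝ → ℕ → ℝ) (ε : ℝ) (hε : 0 < ε)
    (hβ : ∀ x t : ℝ, 0 < |t| → |t| < ε →
      (Nat.factorial r : ℝ) * mpolylog (List.replicate r 1) (1 - Real.exp (-t)) /
          ((1 + lam * t) ^ (1 / lam) - 1) ^ r * (1 + lam * t) ^ (x / lam) =
        ∑' n : ℕ, β x n * t ^ n / (Nat.factorial n : ℝ))
    (hγ : ∀ x t : ℝ, 0 < |t| → |t| < ε →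
      (t / ((1 + lam * t) ^ (1 / lam) - 1)) ^ r * (1 + lam * t) ^ (x / lam) =
        ∑' n : ℕ, γ x n * t ^ n / (Nat.factorial n : ℝ))
    (n : ℕ) (x : ℝ) :
    β x n = γ x n := by
  set V : ℝ → ℝ := fun t =>
    (t / ((1 + lam * t) ^ (1 / lam) - 1)) ^ r * (1 + lam * t) ^ (x / lam)
  have hnear : ∀ᶠ t in 𝓝 (0 : ℝ), 0 < 1 + lam * t ∧ -Real.log 2 < t ∧ |t| < ε :=
    (continuousAt_const.eventually_lt (continuous_const.add
      (continuous_const_mul lam)).continuousAt (by simp)).and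
    ((lt_mem_nhds (neg_neg_of_pos (Real.log_pos one_lt_two))).and
      ((continuous_abs.tendsto' 0 0 abs_zero).eventually (gt_mem_nhds hε)))
  have hgen : ∀ᶠ t in 𝓝[≠] (0 : ℝ), ∑' m, β x m / m.factorial * t ^ m = V t ∧
      ∑' m, γ x m / m.factorial * t ^ m = V t ∧ V t ≠ 0 := by
    filter_upwards [nhdsWithin_le_nhds hnear, self_mem_nhdsWithin] with t ⟨hpos, hlog, htε⟩ ht
    have ht' : 0 < |t| := abs_pos.2 ht
    simp only [div_mul_eq_mul_div]
    refine ⟨?_, (hγ x t ht' htε).symm, ?_⟩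
    · rw [← hβ x t ht' htε, factorial_mul_mpolylog_replicate_one_one_sub_exp r hlog]
      simp only [V, div_pow]
    · exact mul_ne_zero (pow_ne_zero _ (div_ne_zero ht (sub_ne_zero.2
        (one_add_mul_rpow_one_div_ne_one hlam hpos ht)))) (Real.rpow_pos_of_pos hpos _).ne'
  have hcoeff := eq_of_tsum_mul_pow_eventuallyEq (a := fun m => β x m / m.factorial)
    (b := fun m => γ x m / m.factorial)
    (hgen.mono fun t ⟨hβt, _, hV⟩ => by_contra fun hs =>
      hV (hβt.symm.trans (tsum_eq_zero_of_not_summable hs)))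
    (hgen.mono fun t ⟨_, hγt, hV⟩ => by_contra fun hs =>
      hV (hγt.symm.trans (tsum_eq_zero_of_not_summable hs)))
    (hgen.mono fun t ⟨hβt, hγt, _⟩ => hβt.trans hγt.symm)
  exact (div_left_inj' (by positivity)).1 (congrFun hcoeff n)

/-- If `β x n` are the degenerate multi-poly-Bernoulli polynomials with all `r` indices `1`,
and `γ x n = β_{n,λ}^{(r)}(x)` are Carlitz's higher-order degenerate Bernoulli polynomials
(defined by `(t/((1+λt)^{1/λ}-1))^r (1+λt)^{x/λ} = ∑_n γ x n · t^n/n!`), then they coincide. -/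
theorem degMultiPolyBernoulli_ones_eq_carlitz (lam : ℝ) (hlam : lam ≠ 0)
    (r : ℕ) (hr : 0 < r)
    (β γ : ℝ → ℕ → ℝ) (ε : ℝ) (hε : 0 < ε)
    (hβ : ∀ x t : ℝ, 0 < |t| → |t| < ε →
      (Nat.factorial r : ℝ) * mpolylog (List.replicate r 1) (1 - Real.exp (-t)) /
          ((1 + lam * t) ^ (1 / lam) - 1) ^ r * (1 + lam * t) ^ (x / lam) =
        ∑' n : ℕ, β x n * t ^ n / (Nat.factorial n : ℝ))
    (hγ : ∀ x t : ℝ, 0 < |t| → |t| < ε →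
      (t / ((1 + lam * t) ^ (1 / lam) - 1)) ^ r * (1 + lam * t) ^ (x / lam) =
        ∑' n : ℕ, γ x n * t ^ n / (Nat.factorial n : ℝ))
    (n : ℕ) (x : ℝ) :
    β x n = γ x n :=
  degMultiPolyBernoulli_ones_eq_carlitz_general lam hlam r β γ ε hε hβ hγ n x
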